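/- arXiv:1804.06037 — 2 statements merged into one kernel-verified Lean document; each statement's English description precedes it below -/
import Mathlib

section
/- A nonempty word w over a totally ordered alphabet is not a power of a strictly shorter word (i.e., w is primitive) if and only if the rotational orbit of w contains exactly one Lyndon word. -/
/-- A Lyndon word: a nonempty word strictly smaller (in lexicographic order)
than each of its proper nonempty suffixes (equivalently, than each of its
nontrivial rotations). -/
def IsLyndon {α : Type*} [LinearOrder α] (w : List α) : Prop :=
  w ≠ [] ∧ ∀ u v : List α, u ≠ [] → v ≠ [] → w = u ++ v → w < v

/-- A word is primitive if it is not a power `u^k` (`k ≥ 2`) of a word. -/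
def IsPrimitiveWord {α : Type*} (w : List α) : Prop :=
  ¬ ∃ (u : List α) (k : ℕ), 2 ≤ k ∧ w = (List.replicate k u).flatten

/-!
Primitivity is invariant under rotation, since a rotation of `x ^ k` is `(x') ^ k` for a rotation
`x'` of `x`. A Lyndon word is primitive (a word `x ^ k` with `k ≥ 2` is not smaller than its
suffix `x`), so a word with a Lyndon rotation is primitive. Conversely, the least rotation `v` of a
primitive word is strictly smaller than its nontrivial rotations: `u ++ s = s ++ u` would make `u`
and `s` powers of a common word. Being strictly smaller than all nontrivial rotations is equivalent
to being Lyndon, and two Lyndon words `u ++ s` and `s ++ u` would each be smaller than the other,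
so the Lyndon rotation is unique.
-/

namespace List

variable {α : Type*}

theorem flatten_replicate_append_comm (x y : List α) (k : ℕ) :
    (replicate k (x ++ y)).flatten ++ x = x ++ (replicate k (y ++ x)).flatten := by
  induction k with
  | zero => simp
  | succ k ih => simp only [replicate_succ, flatten_cons, append_assoc, ih]

theorem rotate_one_flatten_replicate (x : List α) (k : ℕ) :
    (replicate k x).flatten.rotate 1 = (replicate k (x.rotate 1)).flatten := by
  rcases x with _ | ⟨a, t⟩
  · simp
  rcases k with _ | k
  · simp
  have h := flatten_replicate_append_comm [a] t k
  simp only [cons_append, nil_append] at h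
  simp [replicate_succ, rotate_cons_succ, h]

theorem rotate_flatten_replicate (x : List α) (k i : ℕ) :
    (replicate k x).flatten.rotate i = (replicate k (x.rotate i)).flatten := by
  induction i with
  | zero => simp
  | succ i ih => rw [← rotate_rotate, ih, rotate_one_flatten_replicate, rotate_rotate]

theorem isRotated_iff_exists_append {l l' : List α} :
    l ~r l' ↔ ∃ u s, l = u ++ s ∧ l' = s ++ u := by
  refine ⟨fun h => ?_, fun ⟨u, s, hl, hl'⟩ => hl ▸ hl' ▸ isRotated_append⟩
  obtain ⟨n, hn, rfl⟩ := isRotated_iff_mod.mp h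
  exact ⟨l.take n, l.drop n, (take_append_drop n l).symm, rotate_eq_drop_append_take hn⟩

theorem exists_flatten_replicate_of_append_comm {u s : List α} (h : u ++ s = s ++ u) :
    ∃ t a b, u = (replicate a t).flatten ∧ s = (replicate b t).flatten := by
  induction hn : u.length + s.length using Nat.strong_induction_on generalizing u s with
  | _ n ih =>
  wlog hle : u.length ≤ s.length generalizing u s
  · obtain ⟨t, a, b, hs, hu⟩ := this h.symm (by omega) (by omega)
    exact ⟨t, b, a, hu, hs⟩
  rcases eq_or_ne u [] with rfl | hu
  · exact ⟨s, 0, 1, by simp, by simp⟩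
  obtain ⟨r, rfl⟩ : u <+: s :=
    prefix_of_prefix_length_le (h ▸ prefix_append u s) (prefix_append s u) hle
  have hr : u ++ r = r ++ u := append_cancel_left (as := u) (by rw [h, append_assoc])
  have hlt : u.length + r.length < n := by
    have := length_pos_iff.mpr hu
    simp only [length_append] at hn
    omega
  obtain ⟨t, a, b, rfl, rfl⟩ := ih _ hlt hr rfl
  exact ⟨t, a, a + b, rfl, by rw [replicate_add, flatten_append]⟩

theorem exists_isRotated_forall_le [LinearOrder α] (w : List α) :
    ∃ v, v ~r w ∧ ∀ v', v' ~r w → v ≤ v' := by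
  have hS : w.cyclicPermutations.toFinset.Nonempty :=
    ⟨w, mem_toFinset.mpr (mem_cyclicPermutations_self w)⟩
  refine ⟨_, mem_cyclicPermutations_iff.mp (mem_toFinset.mp (Finset.min'_mem _ hS)),
    fun v' hv' => Finset.min'_le _ _ ?_⟩
  exact mem_toFinset.mpr (mem_cyclicPermutations_iff.mpr hv')

theorem append_left_lt_iff [LinearOrder α] {s t u : List α} : s ++ t < s ++ u ↔ t < u :=
  ⟨fun h => (lt_trichotomy t u).resolve_right fun h' => h'.elim (by rintro rfl; exact h.false)
    fun hut => (h.trans (append_left_lt hut)).false, append_left_lt⟩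

theorem append_lt_or_isPrefix_of_lt [LinearOrder α] {s v : List α} (h : s < v) (z : List α) :
    s ++ z < v ∨ s <+: v := by
  induction h with
  | nil => exact Or.inr nil_prefix
  | rel h => exact Or.inl (Lex.rel h)
  | cons _ ih => exact ih.imp Lex.cons (cons_prefix_cons.mpr ⟨rfl, ·⟩)

end List

open List

section

variable {α : Type*}

theorem IsPrimitiveWord.ne_nil {w : List α} (h : IsPrimitiveWord w) : w ≠ [] := by
  rintro rfl
  exact h ⟨[], 2, le_rfl, by simp⟩

theorem IsPrimitiveWord.isRotated {w w' : List α} (h : IsPrimitiveWord w) (hr : w ~r w') :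
    IsPrimitiveWord w' := by
  obtain ⟨p, rfl⟩ := hr.symm
  rintro ⟨x, k, hk, rfl⟩
  exact h ⟨x.rotate p, k, hk, rotate_flatten_replicate x k p⟩

theorem not_isPrimitiveWord_of_append_comm {u s : List α} (hu : u ≠ []) (hs : s ≠ [])
    (h : u ++ s = s ++ u) : ¬ IsPrimitiveWord (u ++ s) := by
  obtain ⟨t, a, b, rfl, rfl⟩ := exists_flatten_replicate_of_append_comm h
  have ha : a ≠ 0 := by rintro rfl; simp at hu
  have hb : b ≠ 0 := by rintro rfl; simp at hs
  exact fun hp => hp ⟨t, a + b, by omega, by rw [replicate_add, flatten_append]⟩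

section LinearOrder

variable [LinearOrder α]

theorem isLyndon_iff_lt_rotations {w : List α} :
    IsLyndon w ↔ w ≠ [] ∧ ∀ u s, u ≠ [] → s ≠ [] → w = u ++ s → w < s ++ u := by
  refine ⟨fun ⟨hw, h⟩ => ⟨hw, fun u s hu hs hus => (h u s hu hs hus).append_right _ u⟩,
    fun ⟨hw, h⟩ => ⟨hw, fun u s hu hs hus => lt_of_not_ge fun hle => ?_⟩⟩
  have hlt : w < s ++ u := h u s hu hs hus
  have hsw : s < w := hle.lt_of_ne (by rintro rfl; simp [hu] at hus)
  rcases append_lt_or_isPrefix_of_lt hsw u with hsuw | ⟨t, rfl⟩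
  · exact hlt.not_gt hsuw
  -- now `w = s ++ t = u ++ s` with `|t| = |u|`: `w < s ++ u` gives `t < u`, but `w < t ++ s`
  have hlen : t.length = u.length := by
    have := congrArg length hus
    simp only [length_append] at this
    omega
  have htu : t < u := append_left_lt_iff.mp hlt
  have ht : t ≠ [] := by rintro rfl; simp_all
  rcases append_lt_or_isPrefix_of_lt htu s with htsu | htu'
  · exact (h s t hs ht rfl).not_gt (hus ▸ Lex.append_right _ s htsu)
  · exact htu.ne (htu'.eq_of_length hlen)

theorem IsLyndon.eq_of_isRotated {v v' : List α} (h : IsLyndon v) (h' : IsLyndon v')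
    (hr : v ~r v') : v = v' := by
  obtain ⟨u, s, rfl, rfl⟩ := isRotated_iff_exists_append.mp hr
  rcases eq_or_ne u [] with rfl | hu
  · simp
  rcases eq_or_ne s [] with rfl | hs
  · simp
  have hlt := (isLyndon_iff_lt_rotations.mp h).2 u s hu hs rfl
  have hlt' := (isLyndon_iff_lt_rotations.mp h').2 s u hs hu rfl
  exact (hlt.trans hlt').false.elim

theorem IsLyndon.isPrimitiveWord {w : List α} (h : IsLyndon w) : IsPrimitiveWord w := by
  rintro ⟨x, k, hk, rfl⟩
  obtain ⟨m, rfl⟩ := Nat.exists_eq_add_of_le' hk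
  have hx : x ≠ [] := by rintro rfl; simp [IsLyndon] at h
  have hlt : (replicate (m + 2) x).flatten < x :=
    h.2 (replicate (m + 1) x).flatten x (by simp [replicate_succ, hx]) hx
      (by simp [replicate_succ'])
  have hpre : x <+: (replicate (m + 2) x).flatten :=
    ⟨(replicate (m + 1) x).flatten, by simp [replicate_succ]⟩
  exact IsPrefix.le hpre hlt

theorem IsPrimitiveWord.isLyndon_of_forall_le {v : List α} (h : IsPrimitiveWord v)
    (hmin : ∀ v', v' ~r v → v ≤ v') : IsLyndon v := by
  refine isLyndon_iff_lt_rotations.mpr ⟨h.ne_nil, fun u s hu hs hv => ?_⟩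
  subst hv
  exact (hmin _ isRotated_append.symm).lt_of_ne
    fun heq => not_isPrimitiveWord_of_append_comm hu hs heq h

end LinearOrder

end

theorem primitive_iff_unique_lyndon_rotation_general {α : Type*} [LinearOrder α]
    (w : List α) :
    IsPrimitiveWord w ↔ ∃! v : List α, (∃ i : ℕ, v = w.rotate i) ∧ IsLyndon v := by
  have orbit : ∀ v, (∃ i, v = w.rotate i) ↔ v ~r w := fun v =>
    (exists_congr fun _ => eq_comm).trans isRotated_comm
  simp only [orbit]
  constructor
  · intro hprim
    obtain ⟨v, hv, hmin⟩ := exists_isRotated_forall_le w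
    have hlyn := (hprim.isRotated hv.symm).isLyndon_of_forall_le
      fun v' hv' => hmin v' (hv'.trans hv)
    exact ⟨v, ⟨hv, hlyn⟩, fun v' ⟨hv', hlyn'⟩ =>
      (hlyn.eq_of_isRotated hlyn' (hv.trans hv'.symm)).symm⟩
  · rintro ⟨v, ⟨hv, hlyn⟩, -⟩
    exact hlyn.isPrimitiveWord.isRotated hv

/-- A nonempty word is primitive if and only if its rotational orbit contains
exactly one Lyndon word. -/
theorem primitive_iff_unique_lyndon_rotation {α : Type*} [LinearOrder α]
    (w : List α) (hw : w ≠ []) :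
    IsPrimitiveWord w ↔ ∃! v : List α, (∃ i : ℕ, v = w.rotate i) ∧ IsLyndon v :=
  primitive_iff_unique_lyndon_rotation_general w
end

section
/- The number of parking functions on n cars equals \((n+1)^{n-1}\). -/
/-- A function `f : {1,…,n} → {1,…,n}` (encoded with `Fin n`, so values are
shifted down by one) is a parking function iff for every `i ∈ {1,…,n}` at
least `i` of its values are `≤ i`; equivalently, the nondecreasing
rearrangement `b₁ ≤ ⋯ ≤ b_n` of its values satisfies `b_i ≤ i`. -/
def IsParkingFunction {n : ℕ} (f : Fin n → Fin n) : Prop :=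
  ∀ i : Fin n, (i : ℕ) + 1 ≤ (Finset.univ.filter fun j => f j ≤ i).card

/-!
Pollak's circle argument. Read preferences `g : Fin n → ZMod (n + 1)` as spots on a circular
street with `n + 1` spots. For exactly one rotation `t`, the shifted preferences `g - t` satisfy
the parking condition, so `(h, t) ↦ h + t` is a bijection from
{parking functions with values in `ZMod (n + 1)`} × `ZMod (n + 1)` onto all `(n + 1) ^ n`
preference functions. Such a parking function never takes the value `n`, so these are exactly
the ordinary parking functions.

Existence and uniqueness of the rotation is a cycle lemma. Let `F p = surplus g p` be the
number of cars preferring one of the first `p` spots (read cyclically) minus `p`. Then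
`F (p + m) = F p - 1` for `m = n + 1`, and `g - t` parks iff `F` is minimal at `t` on the window
`[t, t + m)`. This says that `t` minimises the `m`-periodic function `m * F p + p`, which takes
distinct values on distinct residues mod `m`.
-/

open Finset Function

section CycleLemma

variable {m : ℕ} {F : ℕ → ℤ}

theorem periodic_mul_add_of_add_eq_sub_one (hF : ∀ p, F (p + m) = F p - 1) :
    Periodic (fun p => m * F p + p) m := by
  intro p
  simp only [hF, Nat.cast_add]
  ring

theorem forall_le_add_iff_forall_mul_add_le (hm : 0 < m) (hF : ∀ p, F (p + m) = F p - 1)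
    (p : ℕ) : (∀ k < m, F p ≤ F (p + k)) ↔ ∀ q, m * F p + p ≤ m * F q + q := by
  have hH (j q : ℕ) : m * F (q + j * m) + (q + j * m : ℕ) = m * F q + q := by
    simpa using (periodic_mul_add_of_add_eq_sub_one hF).nat_mul j q
  constructor
  · intro hp q
    have h_add (k : ℕ) : m * F p + p ≤ m * F (p + k) + (p + k : ℕ) := by
      rw [← Nat.mod_add_div' k m, ← add_assoc, hH]
      have hF_le := mul_le_mul_of_nonneg_left (hp (k % m) (Nat.mod_lt k hm)) m.cast_nonneg
      have hp_le : (p : ℤ) ≤ (p + k % m : ℕ) := by exact_mod_cast p.le_add_right _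
      linarith
    have hq : q + p * m = p + (q + p * m - p) := by
      have : p ≤ p * m := Nat.le_mul_of_pos_right p hm
      omega
    rw [← hH p q, hq]
    exact h_add _
  · -- `m * (F p - F (p + k)) ≤ k < m`
    intro hp k hk
    have := hp (p + k)
    push_cast at this
    by_contra! hlt
    nlinarith

theorem existsUnique_lt_forall_le_add (hm : 0 < m) (hF : ∀ p, F (p + m) = F p - 1) :
    ∃! p, p < m ∧ ∀ k < m, F p ≤ F (p + k) := by
  have hH := periodic_mul_add_of_add_eq_sub_one hF
  simp only [forall_le_add_iff_forall_mul_add_le hm hF]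
  obtain ⟨p, hp, hmin⟩ :=
    exists_min_image (range m) (fun p => m * F p + p) ⟨0, mem_range.2 hm⟩
  refine ⟨p, ⟨mem_range.1 hp, fun q => ?_⟩, fun p' ⟨hp', hmin'⟩ => ?_⟩
  · exact (hmin _ (mem_range.2 (Nat.mod_lt q hm))).trans_eq (hH.map_mod_nat q)
  · have hmod : p' ≡ p [MOD m] := by
      rw [Nat.modEq_iff_dvd]
      exact ⟨F p' - F p, by linarith [hmin' p, hmin p' (mem_range.2 hp')]⟩
    exact hmod.eq_of_lt_of_lt hp' (mem_range.1 hp)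

end CycleLemma

section CircularParking

variable {n : ℕ}

def IsParkingFunctionZMod (h : Fin n → ZMod (n + 1)) : Prop :=
  ∀ k ≤ n, k ≤ #{j | (h j).val < k}

theorem card_filter_val_sub_lt (g : Fin n → ZMod (n + 1)) (t : ZMod (n + 1)) {k : ℕ}
    (hk : k ≤ n + 1) : #{j | (g j - t).val < k} = ∑ i ∈ range k, #{j | g j = t + i} := by
  rw [card_eq_sum_card_fiberwise (f := fun j => (g j - t).val) (t := range k)
    (fun j hj => mem_range.2 (mem_filter.1 hj).2)]
  refine sum_congr rfl fun i hik => ?_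
  have hi : i < n + 1 := (mem_range.1 hik).trans_le hk
  rw [filter_filter]
  congr 1
  refine filter_congr fun j _ => ⟨fun ⟨_, hj⟩ => ?_, fun hj => ?_⟩
  · rw [← hj, ZMod.natCast_zmod_val]
    ring
  · simp only [hj, add_sub_cancel_left, ZMod.val_cast_of_lt hi, mem_range.1 hik, and_self]

def surplus (g : Fin n → ZMod (n + 1)) (p : ℕ) : ℤ :=
  ∑ i ∈ range p, ((#{j | g j = i} : ℤ) - 1)

theorem surplus_add (g : Fin n → ZMod (n + 1)) (p : ℕ) {k : ℕ} (hk : k ≤ n + 1) :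
    surplus g (p + k) = surplus g p + #{j | (g j - p).val < k} - k := by
  rw [card_filter_val_sub_lt g p hk, surplus, surplus, sum_range_add]
  simp only [sum_sub_distrib, sum_const, card_range, Nat.cast_add, Nat.cast_sum]
  ring

theorem surplus_add_succ (g : Fin n → ZMod (n + 1)) (p : ℕ) :
    surplus g (p + (n + 1)) = surplus g p - 1 := by
  have hall : #{j | (g j - p).val < n + 1} = n := by
    rw [filter_true_of_mem fun j _ => ZMod.val_lt _, card_univ, Fintype.card_fin]
  rw [surplus_add g p le_rfl, hall]
  push_cast
  ring

theorem isParkingFunctionZMod_sub_iff (g : Fin n → ZMod (n + 1)) (t : ZMod (n + 1)) :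
    IsParkingFunctionZMod (fun j => g j - t) ↔
      ∀ k < n + 1, surplus g t.val ≤ surplus g (t.val + k) := by
  simp only [IsParkingFunctionZMod]
  refine forall_congr' fun k => ?_
  rw [Nat.lt_succ_iff]
  refine imp_congr_right fun hk => ?_
  rw [surplus_add g t.val (by omega), ZMod.natCast_zmod_val]
  omega

theorem existsUnique_isParkingFunctionZMod_sub (g : Fin n → ZMod (n + 1)) :
    ∃! t : ZMod (n + 1), IsParkingFunctionZMod (fun j => g j - t) := by
  obtain ⟨p, ⟨hp, hgood⟩, huniq⟩ :=
    existsUnique_lt_forall_le_add n.succ_pos (surplus_add_succ g)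
  have hval : (p : ZMod (n + 1)).val = p := ZMod.val_cast_of_lt hp
  refine ⟨p, ?_, fun t ht => ?_⟩
  · show IsParkingFunctionZMod _
    rwa [isParkingFunctionZMod_sub_iff, hval]
  · have ht_val := (isParkingFunctionZMod_sub_iff g t).1 ht
    rw [← ZMod.natCast_zmod_val t, huniq t.val ⟨t.val_lt, ht_val⟩]

theorem IsParkingFunctionZMod.val_lt {h : Fin n → ZMod (n + 1)} (hh : IsParkingFunctionZMod h)
    (j : Fin n) : (h j).val < n := by
  refine card_filter_eq_iff (p := fun j => (h j).val < n).1
    (le_antisymm (card_filter_le _ _) ?_) j (mem_univ j)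
  simpa using hh n le_rfl

theorem bijective_isParkingFunctionZMod_add_const :
    Function.Bijective fun x : {h : Fin n → ZMod (n + 1) // IsParkingFunctionZMod h} ×
      ZMod (n + 1) => fun j => x.1.1 j + x.2 := by
  constructor
  · rintro ⟨⟨h, hh⟩, t⟩ ⟨⟨h', hh'⟩, t'⟩ heq
    have heq' (j : Fin n) : h j + t = h' j + t' := congrFun heq j
    obtain rfl : t = t' := (existsUnique_isParkingFunctionZMod_sub fun j => h j + t).unique
      (by simpa using hh) (by simpa [heq'] using hh')
    obtain rfl : h = h' := funext fun j => add_right_cancel (heq' j)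
    rfl
  · intro g
    obtain ⟨t, ht, -⟩ := existsUnique_isParkingFunctionZMod_sub g
    exact ⟨(⟨_, ht⟩, t), funext fun j => sub_add_cancel _ _⟩

theorem card_isParkingFunctionZMod_mul :
    Nat.card {h : Fin n → ZMod (n + 1) // IsParkingFunctionZMod h} * (n + 1) = (n + 1) ^ n := by
  simpa using
    Nat.card_congr (Equiv.ofBijective _ (bijective_isParkingFunctionZMod_add_const (n := n)))

theorem isParkingFunction_iff_isParkingFunctionZMod (f : Fin n → Fin n) :
    IsParkingFunction f ↔ IsParkingFunctionZMod fun j => ((f j : ℕ) : ZMod (n + 1)) := by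
  have hval (j : Fin n) : ((f j : ℕ) : ZMod (n + 1)).val = f j :=
    ZMod.val_cast_of_lt (Nat.lt_succ_of_lt (f j).isLt)
  simp only [IsParkingFunction, IsParkingFunctionZMod, hval]
  constructor
  · rintro hf (_ | k) hk
    · exact Nat.zero_le _
    · simpa only [Nat.lt_succ_iff, Fin.le_iff_val_le_val] using hf ⟨k, hk⟩
  · intro hf i
    simpa only [Nat.lt_succ_iff, Fin.le_iff_val_le_val] using hf ((i : ℕ) + 1) i.isLt

def parkingFunctionEquivZMod :
    {f : Fin n → Fin n // IsParkingFunction f} ≃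
      {h : Fin n → ZMod (n + 1) // IsParkingFunctionZMod h} where
  toFun f := ⟨fun j => (f.1 j : ℕ), (isParkingFunction_iff_isParkingFunctionZMod f.1).1 f.2⟩
  invFun h := ⟨fun j => ⟨(h.1 j).val, h.2.val_lt j⟩, by
    simpa [isParkingFunction_iff_isParkingFunctionZMod] using h.2⟩
  left_inv f := by ext j; simp [ZMod.val_cast_of_lt (Nat.lt_succ_of_lt (f.1 j).isLt)]
  right_inv h := by ext j; simp

end CircularParking

theorem card_parkingFunctions_general (n : ℕ) :
    Nat.card {f : Fin n → Fin n // IsParkingFunction f} = (n + 1) ^ (n - 1) := by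
  rw [Nat.card_congr parkingFunctionEquivZMod]
  have hmul := card_isParkingFunctionZMod_mul (n := n)
  cases n with
  | zero => simpa using hmul
  | succ n =>
    rw [pow_succ] at hmul
    rw [Nat.add_sub_cancel]
    exact Nat.eq_of_mul_eq_mul_right (by omega) hmul

/-- The number of parking functions on `n` cars equals `(n+1)^(n-1)`. -/
theorem card_parkingFunctions (n : ℕ) (hn : 0 < n) :
    Nat.card {f : Fin n → Fin n // IsParkingFunction f} = (n + 1) ^ (n - 1) :=
  card_parkingFunctions_general n
end
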